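/- The real span of the rotational vector fields {Θ^i_{m,n} : i ∈ {1,2}, m, n ≥ 0} is a Lie ideal of the span 𝓛 of {E_{m,n}} ∪ {Θ^i_{m,n}}: for every V in the span of the rotational fields and every W in 𝓛, the bracket [V, W] again lies in the span of the rotational fields. -/

import Mathlib

/-!
Every generator has the form `Z_{m,n} • A` with `A` one of the pairwise commuting linear fields
`E₀₀ = id`, `Θ¹₀₀`, `Θ²₀₀`, and for such fields `[f • A, g • B] = g (Df · B) • A - f (Dg · A) • B`.
The weight `Z_{m,n}` is invariant under both rotations, so `DZ_{m,n} · Θ^i₀₀ = 0`, and homogeneous of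
degree `2(m + n)`, so `DZ_{m,n} · E₀₀ = 2(m + n) Z_{m,n}` by Euler. Hence `[Θ^i_{m,n}, Θ^j_{p,q}] = 0` and
`[Θ^i_{m,n}, E_{p,q}] = 2(m + n) Θ^i_{m+p,n+q}`, and bilinearity and antisymmetry of the bracket on
differentiable fields pass from generators to spans.
-/

/-- Lie bracket of vector fields on ℝ⁴: [V,W](x) = DV(x)(W(x)) − DW(x)(V(x)). -/
noncomputable def bracket (V W : (Fin 4 → ℝ) → (Fin 4 → ℝ)) : (Fin 4 → ℝ) → (Fin 4 → ℝ) :=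
  fun x => fderiv ℝ V x (W x) - fderiv ℝ W x (V x)

/-- The Eulerian vector field E₀₀(x) = x. -/
def E00 : (Fin 4 → ℝ) → (Fin 4 → ℝ) := fun x => x

/-- The rotational vector fields Θ¹₀₀(x) = (−y₁, x₁, 0, 0) and Θ²₀₀(x) = (0, 0, −y₂, x₂). -/
def Theta0 (i : Fin 2) : (Fin 4 → ℝ) → (Fin 4 → ℝ) :=
  if i = 0 then (fun x => ![-(x 1), x 0, 0, 0]) else (fun x => ![0, 0, -(x 3), x 2])

/-- Z_{m,n}(x) = (x₁² + y₁²)^m (x₂² + y₂²)^n. -/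
def Z (m n : ℕ) : (Fin 4 → ℝ) → ℝ :=
  fun x => ((x 0) ^ 2 + (x 1) ^ 2) ^ m * ((x 2) ^ 2 + (x 3) ^ 2) ^ n

/-- E_{m,n} = Z_{m,n} · E₀₀. -/
def Emn (m n : ℕ) : (Fin 4 → ℝ) → (Fin 4 → ℝ) := fun x => Z m n x • E00 x

/-- Θ^i_{m,n} = Z_{m,n} · Θ^i₀₀. -/
def Thmn (i : Fin 2) (m n : ℕ) : (Fin 4 → ℝ) → (Fin 4 → ℝ) := fun x => Z m n x • Theta0 i x

/-- The generators of 𝓛: all E_{m,n} and all Θ^i_{m,n}. -/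
def lieGens : Set ((Fin 4 → ℝ) → (Fin 4 → ℝ)) :=
  {V | ∃ m n : ℕ, V = Emn m n} ∪ {V | ∃ (i : Fin 2) (m n : ℕ), V = Thmn i m n}

/-- The rotational generators: all Θ^i_{m,n}. -/
def rotGens : Set ((Fin 4 → ℝ) → (Fin 4 → ℝ)) :=
  {V | ∃ (i : Fin 2) (m n : ℕ), V = Thmn i m n}

theorem fderiv_smul_clm_apply_sub_fderiv_smul_clm_apply {𝕜 E : Type*} [NontriviallyNormedField 𝕜]
    [NormedAddCommGroup E] [NormedSpace 𝕜 E] {f g : E → 𝕜} {A B : E →L[𝕜] E} {x : E}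
    (hf : DifferentiableAt 𝕜 f x) (hg : DifferentiableAt 𝕜 g x) (hAB : A (B x) = B (A x)) :
    fderiv 𝕜 (fun y => f y • A y) x (g x • B x) - fderiv 𝕜 (fun y => g y • B y) x (f x • A x) =
      (g x * fderiv 𝕜 f x (B x)) • A x - (f x * fderiv 𝕜 g x (A x)) • B x := by
  rw [fderiv_fun_smul hf A.differentiableAt, fderiv_fun_smul hg B.differentiableAt]
  simp only [add_apply, smul_apply, ContinuousLinearMap.smulRight_apply,
    ContinuousLinearMap.fderiv, map_smul, hAB]
  module

noncomputable def Theta0CLM (i : Fin 2) : (Fin 4 → ℝ) →L[ℝ] (Fin 4 → ℝ) :=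
  LinearMap.toContinuousLinearMap
    { toFun := Theta0 i
      map_add' := fun x y => by
        fin_cases i <;> ext j <;> fin_cases j <;> simp [Theta0] <;> ring
      map_smul' := fun c x => by
        fin_cases i <;> ext j <;> fin_cases j <;> simp [Theta0] }

theorem Theta0CLM_apply (i : Fin 2) (x : Fin 4 → ℝ) : Theta0CLM i x = Theta0 i x := rfl

theorem Theta0CLM_comm (i j : Fin 2) (x : Fin 4 → ℝ) :
    Theta0CLM i (Theta0CLM j x) = Theta0CLM j (Theta0CLM i x) := by
  fin_cases i <;> fin_cases j <;> ext k <;> fin_cases k <;> simp [Theta0CLM_apply, Theta0]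

theorem Thmn_eq (i : Fin 2) (m n : ℕ) : Thmn i m n = fun x => Z m n x • Theta0CLM i x := rfl

theorem Emn_eq (m n : ℕ) : Emn m n = fun x => Z m n x • ContinuousLinearMap.id ℝ _ x := rfl

theorem differentiable_Z (m n : ℕ) : Differentiable ℝ (Z m n) := by
  unfold Z; fun_prop

theorem Z_smul (m n : ℕ) (c : ℝ) (x : Fin 4 → ℝ) :
    Z m n (c • x) = c ^ (2 * (m + n)) * Z m n x := by
  have hplane (a b : ℝ) : (c * a) ^ 2 + (c * b) ^ 2 = c ^ 2 * (a ^ 2 + b ^ 2) := by ring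
  simp only [Z, Pi.smul_apply, smul_eq_mul]
  rw [hplane, hplane, mul_pow, mul_pow]
  ring

theorem Z_add_smul_Theta0 (i : Fin 2) (m n : ℕ) (t : ℝ) (x : Fin 4 → ℝ) :
    Z m n (x + t • Theta0 i x) = (1 + t ^ 2) ^ (if i = 0 then m else n) * Z m n x := by
  fin_cases i
  · simp only [Z, Theta0]; simp
    rw [← mul_assoc, ← mul_pow]; ring
  · simp only [Z, Theta0]; simp
    rw [mul_left_comm, ← mul_pow]; ring

theorem Z_mul_Z (m n p q : ℕ) (x : Fin 4 → ℝ) : Z m n x * Z p q x = Z (m + p) (n + q) x := by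
  simp only [Z]; ring

theorem fderiv_Z_apply_self (m n : ℕ) (x : Fin 4 → ℝ) :
    fderiv ℝ (Z m n) x x = 2 * (m + n) * Z m n x := by
  rw [← (differentiable_Z m n x).lineDeriv_eq_fderiv, lineDeriv]
  have : (fun t : ℝ => Z m n (x + t • x)) = fun t => (1 + t) ^ (2 * (m + n)) * Z m n x := by
    funext t; rw [← Z_smul, add_smul, one_smul]
  rw [this, deriv_mul_const (by fun_prop), deriv_fun_pow (by fun_prop)]
  simp

theorem fderiv_Z_apply_Theta0 (i : Fin 2) (m n : ℕ) (x : Fin 4 → ℝ) :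
    fderiv ℝ (Z m n) x (Theta0 i x) = 0 := by
  rw [← (differentiable_Z m n x).lineDeriv_eq_fderiv, lineDeriv]
  simp_rw [Z_add_smul_Theta0]
  split_ifs <;> simp

theorem bracket_swap (V W : (Fin 4 → ℝ) → (Fin 4 → ℝ)) : bracket W V = -bracket V W := by
  funext x; simp [bracket]

theorem bracket_zero_left (W : (Fin 4 → ℝ) → (Fin 4 → ℝ)) : bracket 0 W = 0 := by
  funext x; simp [bracket]

theorem bracket_add_left {V V' : (Fin 4 → ℝ) → (Fin 4 → ℝ)} (hV : Differentiable ℝ V)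
    (hV' : Differentiable ℝ V') (W : (Fin 4 → ℝ) → (Fin 4 → ℝ)) :
    bracket (V + V') W = bracket V W + bracket V' W := by
  funext x
  simp only [bracket, fderiv_add (hV x) (hV' x), Pi.add_apply, add_apply, map_add]
  abel

theorem bracket_smul_left {V : (Fin 4 → ℝ) → (Fin 4 → ℝ)} (hV : Differentiable ℝ V) (c : ℝ)
    (W : (Fin 4 → ℝ) → (Fin 4 → ℝ)) : bracket (c • V) W = c • bracket V W := by
  funext x
  simp only [bracket, fderiv_const_smul (hV x) c, Pi.smul_apply, smul_apply, map_smul, smul_sub]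

theorem differentiable_of_mem_span {s : Set ((Fin 4 → ℝ) → (Fin 4 → ℝ))}
    (hs : ∀ v ∈ s, Differentiable ℝ v) {V : (Fin 4 → ℝ) → (Fin 4 → ℝ)}
    (hV : V ∈ Submodule.span ℝ s) : Differentiable ℝ V := by
  induction hV using Submodule.span_induction with
  | mem v hv => exact hs v hv
  | zero => exact differentiable_const 0
  | add v v' _ _ hv hv' => exact hv.add hv'
  | smul c v _ hv => exact hv.const_smul c

theorem bracket_mem_of_mem_span_left {s : Set ((Fin 4 → ℝ) → (Fin 4 → ℝ))}
    {p : Submodule ℝ ((Fin 4 → ℝ) → (Fin 4 → ℝ))} (hs : ∀ v ∈ s, Differentiable ℝ v)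
    {W : (Fin 4 → ℝ) → (Fin 4 → ℝ)} (hW : ∀ v ∈ s, bracket v W ∈ p)
    {V : (Fin 4 → ℝ) → (Fin 4 → ℝ)} (hV : V ∈ Submodule.span ℝ s) : bracket V W ∈ p := by
  induction hV using Submodule.span_induction with
  | mem v hv => exact hW v hv
  | zero => simpa only [bracket_zero_left] using p.zero_mem
  | add v v' hv hv' ih ih' =>
    rw [bracket_add_left (differentiable_of_mem_span hs hv) (differentiable_of_mem_span hs hv')]
    exact p.add_mem ih ih'
  | smul c v hv ih =>
    rw [bracket_smul_left (differentiable_of_mem_span hs hv)]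
    exact p.smul_mem c ih

theorem differentiable_Thmn (i : Fin 2) (m n : ℕ) : Differentiable ℝ (Thmn i m n) :=
  (differentiable_Z m n).smul (Theta0CLM i).differentiable

theorem differentiable_Emn (m n : ℕ) : Differentiable ℝ (Emn m n) :=
  (differentiable_Z m n).smul (ContinuousLinearMap.id ℝ _).differentiable

theorem bracket_Thmn_Thmn (i j : Fin 2) (m n p q : ℕ) : bracket (Thmn i m n) (Thmn j p q) = 0 := by
  funext x
  rw [bracket, Thmn_eq, Thmn_eq, fderiv_smul_clm_apply_sub_fderiv_smul_clm_apply
    (differentiable_Z m n x) (differentiable_Z p q x) (Theta0CLM_comm i j x)]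
  simp [Theta0CLM_apply, fderiv_Z_apply_Theta0]

theorem bracket_Thmn_Emn (i : Fin 2) (m n p q : ℕ) :
    bracket (Thmn i m n) (Emn p q) = (2 * (m + n) : ℝ) • Thmn i (m + p) (n + q) := by
  funext x
  rw [bracket, Thmn_eq, Emn_eq, fderiv_smul_clm_apply_sub_fderiv_smul_clm_apply
    (A := Theta0CLM i) (B := ContinuousLinearMap.id ℝ _) (differentiable_Z m n x)
    (differentiable_Z p q x) rfl]
  simp only [ContinuousLinearMap.id_apply, Theta0CLM_apply, fderiv_Z_apply_self,
    fderiv_Z_apply_Theta0, Thmn, ← Z_mul_Z m n p q x, Pi.smul_apply]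
  module

/-- the span of the rotational fields is a Lie ideal of 𝓛. -/
theorem rotational_span_is_ideal (V W : (Fin 4 → ℝ) → (Fin 4 → ℝ))
    (hV : V ∈ Submodule.span ℝ rotGens) (hW : W ∈ Submodule.span ℝ lieGens) :
    bracket V W ∈ Submodule.span ℝ rotGens := by
  have hrot : ∀ v ∈ rotGens, Differentiable ℝ v := by
    rintro _ ⟨i, m, n, rfl⟩
    exact differentiable_Thmn i m n
  have hlie : ∀ w ∈ lieGens, Differentiable ℝ w := by
    rintro _ (⟨m, n, rfl⟩ | hw)
    exacts [differentiable_Emn m n, hrot _ hw]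
  have hgens : ∀ v ∈ rotGens, ∀ w ∈ lieGens, bracket v w ∈ Submodule.span ℝ rotGens := by
    rintro _ ⟨i, m, n, rfl⟩ _ (⟨p, q, rfl⟩ | ⟨j, p, q, rfl⟩)
    · rw [bracket_Thmn_Emn]
      exact Submodule.smul_mem _ _ (Submodule.subset_span ⟨i, m + p, n + q, rfl⟩)
    · rw [bracket_Thmn_Thmn]
      exact Submodule.zero_mem _
  refine bracket_mem_of_mem_span_left hrot (fun v hv => ?_) hV
  rw [bracket_swap, Submodule.neg_mem_iff]
  refine bracket_mem_of_mem_span_left hlie (fun w hw => ?_) hW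
  rw [bracket_swap, Submodule.neg_mem_iff]
  exact hgens v hv w hw
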